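/- (Validity of pruning.) Suppose Assumption A1 holds for g, and suppose the base set D satisfies Z*_{t',s} ⊆ D for every t' ≥ s. If Z_{t,s} = ∅ for some t ≥ s, then Z*_{t+h,s} = ∅ for every natural number h; that is, once the maintained living set of change s is empty, the change s is never again optimal for any mean value. -/

import Mathlib

/-- The functional cost of candidate change `s` at time `t`, evaluated at mean `μ`:
`f̃_{t,s}(μ) = F(s) + Σ_{i=s+1}^{t} (y i − μ)² + α − β·g(t−s)`. -/
noncomputable def ftilde (y F : ℕ → ℝ) (α β : ℝ) (g : ℕ → ℝ) (t s : ℕ) (μ : ℝ) : ℝ :=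
  F s + ∑ i ∈ Finset.Icc (s + 1) t, (y i - μ) ^ 2 + α - β * g (t - s)

/-- `I_{t,s,s'}`: the set of means on which change `s` beats change `s'` at time `t`. -/
def Iset (y F : ℕ → ℝ) (α β : ℝ) (g : ℕ → ℝ) (t s s' : ℕ) : Set ℝ :=
  {μ : ℝ | ftilde y F α β g t s μ ≤ ftilde y F α β g t s' μ}

/-- `I_{∞,s,s'}`: the limiting comparison set as `t → ∞`. -/
def Iinf (y F : ℕ → ℝ) (s s' : ℕ) : Set ℝ :=
  {μ : ℝ | F s - F s' + ∑ i ∈ Finset.Icc (s + 1) s', (y i - μ) ^ 2 ≤ 0}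

/-- `Z*_{t,s}`: the exact living set of change `s` at time `t` (ties between equal
costs are assigned to the older change). -/
noncomputable def Zstar (y F : ℕ → ℝ) (α β : ℝ) (g : ℕ → ℝ) (t s : ℕ) : Set ℝ :=
  {μ : ℝ | (∀ s'' : ℕ, s'' < s → ftilde y F α β g t s μ < ftilde y F α β g t s'' μ) ∧
           (∀ s' : ℕ, s < s' → s' ≤ t → ftilde y F α β g t s μ ≤ ftilde y F α β g t s' μ)}

/-!
For `s ≤ s' ≤ t` the difference `f̃_{t,s} - f̃_{t,s'}` is a `t`-independent data term plus
`β · (g (t - s') - g (t - s))`, and by A1 this penalty gap increases to `0`. Hence a comparison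
won by `s` against a later change at time `t'` was already won at every earlier time, and `s`
can beat an older change `s''` at some time only if the data term of `I_{∞,s'',s}` is positive.
So no pruning step removes a point of `Z*_{t',s}` for later `t'`, i.e. `Z*_{t',s} ⊆ Z_{t,s}`
whenever `s ≤ t ≤ t'`.
-/

/-- Assumption A1 on the penalty `g`. -/
def PenaltyGapsIncreaseToZero (g : ℕ → ℝ) : Prop :=
  ∀ s s' : ℕ, s < s' →
    (∀ t₁ t₂ : ℕ, s' < t₁ → t₁ ≤ t₂ →
      g (t₁ - s') - g (t₁ - s) ≤ g (t₂ - s') - g (t₂ - s)) ∧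
    Filter.Tendsto (fun t : ℕ => g (t - s') - g (t - s)) Filter.atTop (nhds 0)

theorem le_of_tendsto_of_monotone_tail {α : Type*} [TopologicalSpace α] [Preorder α]
    [OrderClosedTopology α] {f : ℕ → α} {a : ℕ} {l : α}
    (hmono : ∀ t₁ t₂ : ℕ, a < t₁ → t₁ ≤ t₂ → f t₁ ≤ f t₂)
    (hlim : Filter.Tendsto f Filter.atTop (nhds l)) {t : ℕ} (ht : a < t) : f t ≤ l :=
  ge_of_tendsto hlim (Filter.eventually_atTop.2 ⟨t, fun _ hu => hmono t _ ht hu⟩)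

namespace PenaltyGapsIncreaseToZero

variable {g : ℕ → ℝ} (hg : PenaltyGapsIncreaseToZero g) {s s' : ℕ}
include hg

theorem gap_mono (hss' : s < s') {t₁ t₂ : ℕ} (ht₁ : s' < t₁) (ht : t₁ ≤ t₂) :
    g (t₁ - s') - g (t₁ - s) ≤ g (t₂ - s') - g (t₂ - s) :=
  (hg s s' hss').1 t₁ t₂ ht₁ ht

theorem gap_nonpos (hss' : s < s') {t : ℕ} (ht : s' < t) :
    g (t - s') - g (t - s) ≤ 0 :=
  le_of_tendsto_of_monotone_tail (hg s s' hss').1 (hg s s' hss').2 ht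

end PenaltyGapsIncreaseToZero

section PenalizedCost

variable (y F : ℕ → ℝ) (α β : ℝ) (g : ℕ → ℝ)

theorem ftilde_sub_ftilde {s s' t : ℕ} (hss' : s ≤ s') (hs't : s' ≤ t) (μ : ℝ) :
    ftilde y F α β g t s μ - ftilde y F α β g t s' μ =
      (F s - F s' + ∑ i ∈ Finset.Icc (s + 1) s', (y i - μ) ^ 2) +
        β * (g (t - s') - g (t - s)) := by
  simp only [ftilde, Finset.Icc_add_one_left_eq_Ioc]
  rw [← Finset.sum_Ioc_consecutive _ hss' hs't]
  ring

theorem mem_Iset_of_later_ftilde_le (hβ : 0 ≤ β) {s s' t t' : ℕ} {μ : ℝ}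
    (hss' : s ≤ s') (hs't : s' ≤ t) (htt' : t ≤ t')
    (hgap : g (t - s') - g (t - s) ≤ g (t' - s') - g (t' - s))
    (hle : ftilde y F α β g t' s μ ≤ ftilde y F α β g t' s' μ) :
    μ ∈ Iset y F α β g t s s' := by
  have hnow := ftilde_sub_ftilde y F α β g hss' hs't μ
  have hlate := ftilde_sub_ftilde y F α β g hss' (hs't.trans htt') μ
  have := mul_le_mul_of_nonneg_left hgap hβ
  show ftilde y F α β g t s μ ≤ ftilde y F α β g t s' μ
  linarith

theorem notMem_Iinf_of_ftilde_lt (hβ : 0 ≤ β) {s'' s t : ℕ} {μ : ℝ}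
    (hs''s : s'' ≤ s) (hst : s ≤ t) (hgap : g (t - s) - g (t - s'') ≤ 0)
    (hlt : ftilde y F α β g t s μ < ftilde y F α β g t s'' μ) :
    μ ∉ Iinf y F s'' s := by
  intro hmem
  have hdiff := ftilde_sub_ftilde y F α β g hs''s hst μ
  have := mul_nonpos_of_nonneg_of_nonpos hβ hgap
  have hdata : F s'' - F s + ∑ i ∈ Finset.Icc (s'' + 1) s, (y i - μ) ^ 2 ≤ 0 := hmem
  linarith

theorem Zstar_subset_pruned (hβ : 0 ≤ β) (hg : PenaltyGapsIncreaseToZero g)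
    {s n t' : ℕ} {Future Past : Set ℕ}
    (hFuture : Future ⊆ Set.Icc (s + 1) n) (hPast : Past ⊆ Set.Iio s)
    (hsn : s ≤ n) (hnt' : n < t') :
    Zstar y F α β g t' s ⊆
      (⋂ s' ∈ Future, Iset y F α β g (n + 1) s s') \ ⋃ s'' ∈ Past, Iinf y F s'' s := by
  intro μ ⟨holder, hlater⟩
  simp only [Set.mem_sdiff, Set.mem_iInter, Set.mem_iUnion, not_exists]
  refine ⟨fun s' hs' => ?_, fun s'' hs'' => ?_⟩
  · obtain ⟨hss', hs'n⟩ := hFuture hs'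
    exact mem_Iset_of_later_ftilde_le y F α β g hβ (by omega) (by omega) hnt'
      (hg.gap_mono hss' (by omega) hnt') (hlater s' hss' (by omega))
  · have hs''s : s'' < s := hPast hs''
    exact notMem_Iinf_of_ftilde_lt y F α β g hβ hs''s.le (by omega)
      (hg.gap_nonpos hs''s (by omega)) (holder s'' hs''s)

end PenalizedCost

/-- Validity of pruning: under Assumption A1, if the base set `D`
contains every exact living set `Z*_{t',s}` for `t' ≥ s`, then for any choice of the
families `Future_{t,s}` and `Past_s`, with the recursively maintained set `Z_{t,s}` given by
`Z_{s,s} = D` and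
`Z_{t+1,s} = (Z_{t,s} ∩ ⋂_{s' ∈ Future_{t,s}} I_{t+1,s,s'}) \ ⋃_{s'' ∈ Past_s} I_{∞,s'',s}`,
if `Z_{t,s} = ∅` for some `t ≥ s`, then `Z*_{t+h,s} = ∅` for every natural `h`. -/
theorem pruning_valid (y F : ℕ → ℝ) (α β : ℝ) (hβ : 0 ≤ β) (g : ℕ → ℝ)
    (hA1 : ∀ s s' : ℕ, s < s' →
      (∀ t₁ t₂ : ℕ, s' < t₁ → t₁ ≤ t₂ →
        g (t₁ - s') - g (t₁ - s) ≤ g (t₂ - s') - g (t₂ - s)) ∧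
      Filter.Tendsto (fun t : ℕ => g (t - s') - g (t - s)) Filter.atTop (nhds 0))
    (s : ℕ) (D : Set ℝ) (hD : ∀ t' : ℕ, s ≤ t' → Zstar y F α β g t' s ⊆ D)
    (Future : ℕ → Set ℕ) (hFuture : ∀ t : ℕ, s ≤ t → Future t ⊆ Set.Icc (s + 1) t)
    (Past : Set ℕ) (hPast : Past ⊆ Set.Iio s)
    (Z : ℕ → Set ℝ) (hZs : Z s = D)
    (hZrec : ∀ t : ℕ, s ≤ t →
      Z (t + 1) =
        (Z t ∩ ⋂ s' ∈ Future t, Iset y F α β g (t + 1) s s') \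
          ⋃ s'' ∈ Past, Iinf y F s'' s) :
    ∀ t : ℕ, s ≤ t → Z t = ∅ → ∀ h : ℕ, Zstar y F α β g (t + h) s = ∅ := by
  have hZstar_subset : ∀ t, s ≤ t → ∀ t', t ≤ t' → Zstar y F α β g t' s ⊆ Z t := by
    intro t hst
    induction t, hst using Nat.le_induction with
    | base => exact fun t' ht' => hZs ▸ hD t' ht'
    | succ n hsn ih =>
      intro t' hnt' μ hμ
      have hpruned := Zstar_subset_pruned y F α β g hβ hA1 (hFuture n hsn) hPast hsn hnt' hμ
      rw [hZrec n hsn, Set.inter_sdiff_assoc]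
      exact ⟨ih t' (by omega) hμ, hpruned⟩
  intro t hst hZt h
  exact Set.subset_empty_iff.1 (hZt ▸ hZstar_subset t hst (t + h) (Nat.le_add_right t h))
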